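/- Let H be a finite-dimensional Hopf algebra over a field k with bijective antipode S, {x_i} a basis of H with dual basis {f^i} of H*, and B := H* ⊗ H the associative unital algebra with multiplication (φ ⊗ h)·(φ' ⊗ h') = ψ ⊗ h₍₂₎h', where ψ(x) = φ(x₍₁₎)·φ'(S^{-1}(h₍₃₎) x₍₂₎ S²(h₍₁₎)). Let V be a unital right B-module, regarded as a right–left anti-Yetter–Drinfeld module over H via v·h := v·(ε ⊗ h) and ∇(v) := Σ_i x_i ⊗ v·(f^i ⊗ 1_H), and set ρ := Σ_i f^i ⊗ x_i ∈ B. Then V is stable, i.e. v₍₀₎·v₍₋₁₎ = v for all v ∈ V, if and only if v·ρ = v for all v ∈ V, i.e. the fixed point set of ρ is all of V. -/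

import Mathlib

open TensorProduct

section Setup

variable (k : Type*) [Field k] (H : Type*) [Ring H] [HopfAlgebra k H]

/-- The iterated comultiplication `h ↦ h₍₁₎ ⊗ (h₍₂₎ ⊗ h₍₃₎)`. -/
noncomputable def Delta2 : H →ₗ[k] H ⊗[k] (H ⊗[k] H) :=
  (LinearMap.lTensor H (Coalgebra.comul (R := k))) ∘ₗ (Coalgebra.comul (R := k))

/-- The antipode of `H`. -/
noncomputable def antS : H →ₗ[k] H := HopfAlgebra.antipode (R := k)

/-- The (two-sided) inverse of the antipode, which exists when the antipode is
bijective. -/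
noncomputable def antSinv : H → H := Function.invFun (antS k H)

/-- The characterization (in Sweedler notation, through arbitrary finite
representations of `Δ²(h)` and `Δ(x)`) of the multiplication
`(φ ⊗ h)·(φ' ⊗ h') = ψ ⊗ h₍₂₎h'`, `ψ(x) = φ(x₍₁₎)·φ'(S⁻¹(h₍₃₎) x₍₂₎ S²(h₍₁₎))`
of the algebra `B = B_AYD(H) := Hom_k(H,k) ⊗ H`. -/
noncomputable def mulCharB
    (mul : (Module.Dual k H ⊗[k] H) →ₗ[k] (Module.Dual k H ⊗[k] H) →ₗ[k]
      (Module.Dual k H ⊗[k] H)) : Prop :=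
  ∀ (φ φ' : Module.Dual k H) (h h' : H) (n : ℕ) (A B C : Fin n → H),
    Delta2 k H h = ∑ i : Fin n, A i ⊗ₜ[k] (B i ⊗ₜ[k] C i) →
    ∀ ψ : Fin n → Module.Dual k H,
      (∀ (i : Fin n) (x : H) (m : ℕ) (P Q : Fin m → H),
        Coalgebra.comul (R := k) x = ∑ j : Fin m, P j ⊗ₜ[k] Q j →
        ψ i x = ∑ j : Fin m,
          φ (P j) * φ' (antSinv k H (C i) * Q j * antS k H (antS k H (A i)))) →
      mul (φ ⊗ₜ[k] h) (φ' ⊗ₜ[k] h') = ∑ i : Fin n, ψ i ⊗ₜ[k] (B i * h')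

end Setup

/-!
Since `Δ²(1) = 1 ⊗ 1 ⊗ 1` and `S(1) = S⁻¹(1) = 1`, the product rule of `B` collapses to
`(φ ⊗ 1)·(ε ⊗ h) = φ ⊗ h`. Hence `v₍₀₎·v₍₋₁₎ = Σ_i (v·(f^i ⊗ 1))·(ε ⊗ x_i) = v·ρ`, and
stability is literally the statement that `ρ` fixes every vector.
-/

theorem Coalgebra.sum_counit_smul_eq_of_comul_eq {R A : Type*} [CommSemiring R]
    [AddCommMonoid A] [Module R A] [Coalgebra R A] {ι : Type*} [Fintype ι] {x : A}
    {P Q : ι → A} (hx : Coalgebra.comul (R := R) x = ∑ j, P j ⊗ₜ[R] Q j) :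
    ∑ j, Coalgebra.counit (R := R) (Q j) • P j = x := by
  simpa [hx, map_sum] using
    congrArg (_root_.TensorProduct.rid R A) (Coalgebra.lTensor_counit_comul (R := R) x)

section BAYD

variable (k : Type*) [Field k] (H : Type*) [Ring H] [HopfAlgebra k H]

theorem antS_one : antS k H 1 = 1 :=
  HopfAlgebra.antipode_one

variable {k H} in
theorem antSinv_one (hS : Function.Injective (antS k H)) : antSinv k H 1 = 1 := by
  simpa only [antSinv, antS_one] using Function.leftInverse_invFun hS (1 : H)

theorem Delta2_one :
    Delta2 k H 1 = ∑ _i : Fin 1, (1 : H) ⊗ₜ[k] ((1 : H) ⊗ₜ[k] (1 : H)) := by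
  simp [Delta2, Bialgebra.comul_one, Algebra.TensorProduct.one_def]

variable {k H}

theorem mul_tmul_one_counit_tmul (hS : Function.Injective (antS k H))
    {mul : (Module.Dual k H ⊗[k] H) →ₗ[k] (Module.Dual k H ⊗[k] H) →ₗ[k]
      (Module.Dual k H ⊗[k] H)}
    (hmul : mulCharB k H mul) (φ : Module.Dual k H) (h : H) :
    mul (φ ⊗ₜ[k] 1) (Coalgebra.counit ⊗ₜ[k] h) = φ ⊗ₜ[k] h := by
  have hψ : ∀ (_ : Fin 1) (x : H) (m : ℕ) (P Q : Fin m → H),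
      Coalgebra.comul (R := k) x = ∑ j, P j ⊗ₜ[k] Q j →
      φ x = ∑ j, φ (P j) * Coalgebra.counit (antSinv k H 1 * Q j * antS k H (antS k H 1)) := by
    intro _ x m P Q hx
    simp only [antSinv_one hS, antS_one, one_mul, mul_one]
    rw [← Coalgebra.sum_counit_smul_eq_of_comul_eq hx]
    simp only [map_sum, map_smul, smul_eq_mul, mul_comm]
  simpa using hmul φ Coalgebra.counit 1 h 1 _ _ _ (Delta2_one k H) (fun _ => φ) hψ

end BAYD

theorem statement8_general (k : Type*) [Field k] (H : Type*) [Ring H] [HopfAlgebra k H]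
    (hS : Function.Bijective (antS k H))
    (ι : Type*) [Fintype ι] (bH : Module.Basis ι k H)
    (V : Type*) [AddCommGroup V] [Module k V]
    (mul : (Module.Dual k H ⊗[k] H) →ₗ[k] (Module.Dual k H ⊗[k] H) →ₗ[k]
      (Module.Dual k H ⊗[k] H))
    (hmul : mulCharB k H mul)
    (act : V →ₗ[k] (Module.Dual k H ⊗[k] H) →ₗ[k] V)
    (hact2 : ∀ (v : V) (x y : Module.Dual k H ⊗[k] H),
      act v (mul x y) = act (act v x) y)
    (ractf : V → H → V)
    (hractf : ∀ (v : V) (h : H),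
      ractf v h = act v ((Coalgebra.counit (R := k) : Module.Dual k H) ⊗ₜ[k] h))
    (ρ : Module.Dual k H ⊗[k] H)
    (hρ : ρ = ∑ i : ι, (bH.coord i : Module.Dual k H) ⊗ₜ[k] bH i) :
    (∀ v : V,
      ∑ i : ι, ractf (act v ((bH.coord i : Module.Dual k H) ⊗ₜ[k] (1 : H))) (bH i) = v)
    ↔ (∀ v : V, act v ρ = v) := by
  have hstab : ∀ v : V,
      ∑ i : ι, ractf (act v ((bH.coord i : Module.Dual k H) ⊗ₜ[k] (1 : H))) (bH i)
        = act v ρ := fun v => by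
    simp only [hρ, map_sum, hractf, ← hact2, mul_tmul_one_counit_tmul hS.injective hmul]
  simp only [hstab]

/-- Let `H` be a finite-dimensional Hopf algebra with bijective antipode,
`{x_i}` a basis of `H` with dual basis `{f^i}`, `B := H* ⊗ H` the algebra of
Statement 5, and `V` a unital right `B`-module, regarded as a right–left
anti-Yetter–Drinfeld module over `H` via `v·h := v·(ε ⊗ h)` and
`∇(v) := Σ_i x_i ⊗ v·(f^i ⊗ 1)`.  With `ρ := Σ_i f^i ⊗ x_i ∈ B`, the module `V` is
stable (`v₍₀₎·v₍₋₁₎ = v` for all `v`) if and only if the fixed point set of `ρ` is all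
of `V` (`v·ρ = v` for all `v`). -/
theorem statement8 (k : Type*) [Field k] (H : Type*) [Ring H] [HopfAlgebra k H]
    [FiniteDimensional k H]
    (hS : Function.Bijective (antS k H))
    (ι : Type*) [Fintype ι] [DecidableEq ι] (bH : Module.Basis ι k H)
    (V : Type*) [AddCommGroup V] [Module k V]
    (mul : (Module.Dual k H ⊗[k] H) →ₗ[k] (Module.Dual k H ⊗[k] H) →ₗ[k]
      (Module.Dual k H ⊗[k] H))
    (hmul : mulCharB k H mul)
    (act : V →ₗ[k] (Module.Dual k H ⊗[k] H) →ₗ[k] V)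
    (hact1 : ∀ v : V,
      act v ((Coalgebra.counit (R := k) : Module.Dual k H) ⊗ₜ[k] (1 : H)) = v)
    (hact2 : ∀ (v : V) (x y : Module.Dual k H ⊗[k] H),
      act v (mul x y) = act (act v x) y)
    (ractf : V → H → V)
    (hractf : ∀ (v : V) (h : H),
      ractf v h = act v ((Coalgebra.counit (R := k) : Module.Dual k H) ⊗ₜ[k] h))
    (ρ : Module.Dual k H ⊗[k] H)
    (hρ : ρ = ∑ i : ι, (bH.coord i : Module.Dual k H) ⊗ₜ[k] bH i) :
    (∀ v : V,
      ∑ i : ι, ractf (act v ((bH.coord i : Module.Dual k H) ⊗ₜ[k] (1 : H))) (bH i) = v)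
    ↔ (∀ v : V, act v ρ = v) :=
  statement8_general k H hS ι bH V mul hmul act hact2 ractf hractf ρ hρ
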